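/- Let A be a finite nontrivial temporal Heyting algebra (0 ≠ 1). Then there exists a least congruence among the congruences of A different from the diagonal relation if and only if the ◆-compatible elements of A have a second-greatest element: there exists a ◆-compatible element a ≠ 1 such that every ◆-compatible element b ≠ 1 satisfies b ≤ a. -/

import Mathlib

/-!
The congruences of a finite temporal Heyting algebra are exactly the relations
`x ~ y ↔ u ⊓ x = u ⊓ y` with `u` ◆-compatible: given a congruence `θ`, take for `u` the least
element of the (finite, meet-closed) class of `⊤`; conversely, for each operation `f` the meet
`u ⊓ f x` depends only on `u ⊓ x`: for the lattice operations and `⇨` always, for `□` because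
`u ≤ □u`, and for `◆` exactly when `u` is ◆-compatible. The correspondence reverses order and
sends `⊤` to the diagonal, so a least non-diagonal congruence is the same thing as a greatest
◆-compatible element below `⊤`.
-/

/-- A congruence of a temporal Heyting algebra. -/
def IsCong {A : Type*} [HeytingAlgebra A] (box dia : A → A) (θ : A → A → Prop) : Prop :=
  Equivalence θ ∧
  (∀ a b c d : A, θ a b → θ c d → θ (a ⊓ c) (b ⊓ d)) ∧
  (∀ a b c d : A, θ a b → θ c d → θ (a ⊔ c) (b ⊔ d)) ∧
  (∀ a b c d : A, θ a b → θ c d → θ (a ⇨ c) (b ⇨ d)) ∧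
  (∀ a b : A, θ a b → θ (box a) (box b)) ∧
  (∀ a b : A, θ a b → θ (dia a) (dia b))

/-- A ◆-compatible element of a temporal Heyting algebra. -/
def DiaCompat {A : Type*} [HeytingAlgebra A] (dia : A → A) (a : A) : Prop :=
  ∀ b : A, a ⊓ dia b ≤ dia (a ⊓ b)

section PrincipalCong

variable {A : Type*} [HeytingAlgebra A] {box dia : A → A} {θ : A → A → Prop} {u : A}

/-- The congruence of the principal filter `↑u`. -/
def principalCong (u : A) : A → A → Prop := fun x y => u ⊓ x = u ⊓ y

lemma principalCong_self_top (u : A) : principalCong u u ⊤ := by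
  simp [principalCong]

lemma principalCong_map {f : A → A} (hf : ∀ x, u ⊓ f (u ⊓ x) = u ⊓ f x) {x y : A}
    (h : principalCong u x y) : principalCong u (f x) (f y) := by
  unfold principalCong at *
  rw [← hf x, h, hf]

lemma principalCong_map₂ {f : A → A → A} (hf : ∀ x y, u ⊓ f (u ⊓ x) (u ⊓ y) = u ⊓ f x y)
    {a b c d : A} (hab : principalCong u a b) (hcd : principalCong u c d) :
    principalCong u (f a c) (f b d) := by
  unfold principalCong at *
  rw [← hf a c, hab, hcd, hf]

lemma inf_himp_inf_inf (u x y : A) : u ⊓ ((u ⊓ x) ⇨ (u ⊓ y)) = u ⊓ (x ⇨ y) := by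
  rw [himp_inf_distrib, himp_eq_top_iff.2 inf_le_left, top_inf_eq, ← himp_himp, inf_himp]

lemma isCong_principalCong (hbox_meet : ∀ a b : A, box (a ⊓ b) = box a ⊓ box b)
    (hbox_incr : ∀ a : A, a ≤ box a) (hdia : Monotone dia) (hu : DiaCompat dia u) :
    IsCong box dia (principalCong u) := by
  refine ⟨⟨fun _ => rfl, Eq.symm, Eq.trans⟩, fun a b c d => principalCong_map₂ ?_,
    fun a b c d => principalCong_map₂ ?_, fun a b c d => principalCong_map₂ (inf_himp_inf_inf u),
    fun a b => principalCong_map ?_, fun a b => principalCong_map ?_⟩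
  · intro x y
    rw [← inf_inf_distrib_left, ← inf_assoc, inf_idem]
  · intro x y
    rw [← inf_sup_left, ← inf_assoc, inf_idem]
  · intro x
    rw [hbox_meet, ← inf_assoc, inf_eq_left.2 (hbox_incr u)]
  · intro x
    exact le_antisymm (inf_le_inf_left u (hdia inf_le_right)) (le_inf inf_le_left (hu x))

lemma principalCong_le_principalCong_iff {v : A} :
    (∀ x y, principalCong u x y → principalCong v x y) ↔ v ≤ u := by
  refine ⟨fun h => ?_, fun hvu x y (hxy : u ⊓ x = u ⊓ y) => ?_⟩
  · simpa [principalCong] using h u ⊤ (principalCong_self_top u)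
  · calc v ⊓ x = v ⊓ (u ⊓ x) := by rw [← inf_assoc, inf_eq_left.2 hvu]
      _ = v ⊓ (u ⊓ y) := by rw [hxy]
      _ = v ⊓ y := by rw [← inf_assoc, inf_eq_left.2 hvu]

lemma principalCong_eq_eq_iff : principalCong u = (fun a b : A => a = b) ↔ u = ⊤ := by
  refine ⟨fun h => ?_, fun h => by subst h; funext x y; simp [principalCong]⟩
  simpa [h] using principalCong_self_top u

namespace IsCong

lemma infClosed_rel_top (hθ : IsCong box dia θ) : InfClosed {x | θ x ⊤} := fun x hx y hy => by
  simpa using hθ.2.1 x ⊤ y ⊤ hx hy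

lemma exists_isLeast_rel_top [Finite A] (hθ : IsCong box dia θ) : ∃ u, IsLeast {x | θ x ⊤} u := by
  have hS : {x | θ x ⊤}.Finite := Set.toFinite _
  refine ⟨hS.toFinset.inf id, ?_, fun x hx => Finset.inf_le (hS.mem_toFinset.2 hx)⟩
  exact hθ.infClosed_rel_top.finsetInf_mem ⟨⊤, hS.mem_toFinset.2 (hθ.1.refl ⊤)⟩
    fun x hx => hS.mem_toFinset.1 hx

lemma eq_principalCong (hθ : IsCong box dia θ) (hu : IsLeast {x | θ x ⊤} u) :
    θ = principalCong u := by
  obtain ⟨hequiv, hinf, -, hhimp, -, -⟩ := hθ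
  have hinf_rel : ∀ x, θ (u ⊓ x) x := fun x => by simpa using hinf u ⊤ x x hu.1 (hequiv.refl x)
  have hhimp_rel : ∀ {x y}, θ x y → u ≤ x ⇨ y := fun {x y} h =>
    hu.2 (by simpa using hhimp x y y y h (hequiv.refl y))
  funext x y
  refine propext ⟨fun h => ?_, fun h => ?_⟩
  · exact le_antisymm (le_inf inf_le_left (le_himp_iff.1 (hhimp_rel h)))
      (le_inf inf_le_left (le_himp_iff.1 (hhimp_rel (hequiv.symm h))))
  · exact hequiv.trans (hequiv.symm (hinf_rel x)) (h ▸ hinf_rel y)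

lemma diaCompat (hθ : IsCong box dia θ) (hu : IsLeast {x | θ x ⊤} u) : DiaCompat dia u := by
  have hdia := (hθ.eq_principalCong hu ▸ hθ).2.2.2.2.2
  intro b
  have hb : u ⊓ dia (u ⊓ b) = u ⊓ dia b := hdia _ _ (by simp [principalCong])
  exact hb ▸ inf_le_right

lemma exists_diaCompat_eq_principalCong [Finite A] (hθ : IsCong box dia θ) :
    ∃ u, DiaCompat dia u ∧ θ = principalCong u := by
  obtain ⟨u, hu⟩ := hθ.exists_isLeast_rel_top
  exact ⟨u, hθ.diaCompat hu, hθ.eq_principalCong hu⟩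

end IsCong

end PrincipalCong

theorem stmt19_general {A : Type*} [HeytingAlgebra A] [Finite A] (box dia : A → A)
    (hbox_meet : ∀ a b : A, box (a ⊓ b) = box a ⊓ box b)
    (hbox_incr : ∀ a : A, a ≤ box a)
    (hadj : ∀ a b : A, dia a ≤ b ↔ a ≤ box b) :
    (∃ θ : A → A → Prop, IsCong box dia θ ∧ θ ≠ (fun a b : A => a = b) ∧
      ∀ θ' : A → A → Prop, IsCong box dia θ' → θ' ≠ (fun a b : A => a = b) →
        ∀ a b : A, θ a b → θ' a b) ↔
    (∃ a : A, DiaCompat dia a ∧ a ≠ ⊤ ∧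
      ∀ b : A, DiaCompat dia b → b ≠ ⊤ → b ≤ a) := by
  have hcong : ∀ {u : A}, DiaCompat dia u → IsCong box dia (principalCong u) :=
    isCong_principalCong hbox_meet hbox_incr (GaloisConnection.monotone_l hadj)
  constructor
  · rintro ⟨θ, hθ, hne, hleast⟩
    obtain ⟨u, hu, rfl⟩ := hθ.exists_diaCompat_eq_principalCong
    refine ⟨u, hu, mt principalCong_eq_eq_iff.2 hne, fun b hb hbne => ?_⟩
    exact principalCong_le_principalCong_iff.1
      (hleast _ (hcong hb) (mt principalCong_eq_eq_iff.1 hbne))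
  · rintro ⟨a, ha, hane, hamax⟩
    refine ⟨principalCong a, hcong ha, mt principalCong_eq_eq_iff.1 hane, ?_⟩
    intro θ' hθ' hne'
    obtain ⟨v, hv, rfl⟩ := hθ'.exists_diaCompat_eq_principalCong
    exact principalCong_le_principalCong_iff.2 (hamax v hv (mt principalCong_eq_eq_iff.2 hne'))

/-- A finite nontrivial temporal Heyting algebra has a least non-diagonal
congruence iff its ◆-compatible elements have a second-greatest element. -/
theorem stmt19 {A : Type*} [HeytingAlgebra A] [Finite A] (box dia : A → A)
    (hbox_meet : ∀ a b : A, box (a ⊓ b) = box a ⊓ box b)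
    (hbox_incr : ∀ a : A, a ≤ box a)
    (hbox_front : ∀ a b : A, box a ≤ b ⊔ (b ⇨ a))
    (hadj : ∀ a b : A, dia a ≤ b ↔ a ≤ box b)
    (hnt : (⊥ : A) ≠ ⊤) :
    (∃ θ : A → A → Prop, IsCong box dia θ ∧ θ ≠ (fun a b : A => a = b) ∧
      ∀ θ' : A → A → Prop, IsCong box dia θ' → θ' ≠ (fun a b : A => a = b) →
        ∀ a b : A, θ a b → θ' a b) ↔
    (∃ a : A, DiaCompat dia a ∧ a ≠ ⊤ ∧
      ∀ b : A, DiaCompat dia b → b ≠ ⊤ → b ≤ a) :=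
  stmt19_general box dia hbox_meet hbox_incr hadj
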